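/- arXiv:0811.3830 — 2 statements merged into one kernel-verified Lean document; each statement's English description precedes it below -/
import Mathlib

section
/- With the notation of the geometric setup: if F ∈ K[x_1,…,x_n] is an L'-homogeneous polynomial, then the simplicial complex D_{L'}^{L}(F) is a simplex; that is, the whole vertex set of D_{L'}^{L}(F) is a face of D_{L'}^{L}. -/
open MvPolynomial

/-- A polynomial is `L`-homogeneous if the difference of any two exponent vectors
occurring in its support lies in `L`. -/
def IsLHomog {n : ℕ} {K : Type*} [CommSemiring K] (L : Set (Fin n → ℤ))
    (F : MvPolynomial (Fin n) K) : Prop :=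
  ∀ u ∈ F.support, ∀ v ∈ F.support, (fun j => ((u j : ℤ) - (v j : ℤ))) ∈ L

/-- An ideal is `L`-homogeneous if it is generated by `L`-homogeneous polynomials. -/
def IsLHomogIdeal {n : ℕ} {K : Type*} [CommSemiring K] (L : Set (Fin n → ℤ))
    (J : Ideal (MvPolynomial (Fin n) K)) : Prop :=
  ∃ S : Set (MvPolynomial (Fin n) K), (∀ F ∈ S, IsLHomog L F) ∧ J = Ideal.span S

/-- The positive part `u⁺` of an integer vector, as an exponent vector. -/
noncomputable def posPart {n : ℕ} (u : Fin n → ℤ) : Fin n →₀ ℕ :=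
  Finsupp.equivFunOnFinite.symm (fun j => (u j).toNat)

/-- The lattice ideal `I_L = ⟨x^{u⁺} - x^{u⁻} : u ∈ L⟩`. -/
noncomputable def latticeIdeal {n : ℕ} (K : Type*) [CommRing K] (L : AddSubgroup (Fin n → ℤ)) :
    Ideal (MvPolynomial (Fin n) K) :=
  Ideal.span {F | ∃ u ∈ L, F = monomial (posPart u) (1 : K) - monomial (posPart (-u)) (1 : K)}

/-- The saturation of a lattice `L ⊆ ℤⁿ`. -/
def satSet {n : ℕ} (L : AddSubgroup (Fin n → ℤ)) : Set (Fin n → ℤ) :=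
  {α | ∃ d : ℤ, d ≠ 0 ∧ d • α ∈ L}

/-- The arithmetical rank of an ideal. -/
noncomputable def ara {R : Type*} [CommSemiring R] (J : Ideal R) : ℕ :=
  sInf {s | ∃ F : Fin s → R, (∀ i, F i ∈ J) ∧ J.radical = (Ideal.span (Set.range F)).radical}

/-- The `L`-homogeneous arithmetical rank of an ideal. -/
noncomputable def araH {n : ℕ} {K : Type*} [CommSemiring K] (L : Set (Fin n → ℤ))
    (J : Ideal (MvPolynomial (Fin n) K)) : ℕ :=
  sInf {s | ∃ F : Fin s → MvPolynomial (Fin n) K, (∀ i, IsLHomog L (F i)) ∧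
    J.radical = (Ideal.span (Set.range F)).radical}

/-- The cone `pos_ℚ(v₁,…,vₙ)` spanned by finitely many vectors of `ℚ^m`. -/
def posQ {n m : ℕ} (v : Fin n → Fin m → ℚ) : Set (Fin m → ℚ) :=
  {x | ∃ d : Fin n → ℚ, (∀ i, 0 ≤ d i) ∧ x = ∑ i, d i • v i}

/-- The subcone `σ(E) = pos_ℚ(rᵢ : i ∈ E)`. -/
def posE {t m : ℕ} (r : Fin t → Fin m → ℚ) (E : Finset (Fin t)) : Set (Fin m → ℚ) :=
  {x | ∃ d : Fin t → ℚ, (∀ i, 0 ≤ d i) ∧ (∀ i ∉ E, d i = 0) ∧ x = ∑ i, d i • r i}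

/-- The relative interior `relint_ℚ(pos_ℚ(rᵢ : i ∈ E))`. -/
def relintE {t m : ℕ} (r : Fin t → Fin m → ℚ) (E : Finset (Fin t)) : Set (Fin m → ℚ) :=
  {x | ∃ d : Fin t → ℚ, (∀ i ∈ E, 0 < d i) ∧ (∀ i ∉ E, d i = 0) ∧ x = ∑ i, d i • r i}

/-- `F` is a face of the cone `σ`: it is cut out by a supporting linear functional. -/
def IsFaceOf {m : ℕ} (σ F : Set (Fin m → ℚ)) : Prop :=
  ∃ c : Fin m → ℚ, (∀ x ∈ σ, 0 ≤ ∑ j, c j * x j) ∧ F = σ ∩ {x | ∑ j, c j * x j = 0}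

/-- The ray spanned by a vector `v`. -/
def rayOf {m : ℕ} (v : Fin m → ℚ) : Set (Fin m → ℚ) := {x | ∃ q : ℚ, 0 ≤ q ∧ x = q • v}

/-- Cast a family of integer vectors to rational vectors. -/
def castQ {n m : ℕ} (a : Fin n → Fin m → ℤ) : Fin n → Fin m → ℚ := fun i j => (a i j : ℚ)

/-- `T` is a face of the simplicial complex `D` (with vertices `𝔼₁,…,𝔼_f`) determined by the
projected cone data `rB`: the relative interiors of the cones `pos_ℚ(rB j : j ∈ 𝔼ᵢ)`, `i ∈ T`,
have a common point. -/
def DFace {t f m : ℕ} (rB : Fin t → Fin m → ℚ) (𝔼 : Fin f → Finset (Fin t))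
    (T : Set (Fin f)) : Prop :=
  (⋂ j ∈ T, relintE rB (𝔼 j)).Nonempty

/-- The cone `cone(N)` of a monomial with exponent vector `u`:
the intersection of all subcones `σ(E)` containing all the `aᵢ` with `i` in the support of `u`. -/
def coneOf {n t m : ℕ} (aQ : Fin n → Fin m → ℚ) (rQ : Fin t → Fin m → ℚ)
    (u : Fin n →₀ ℕ) : Set (Fin m → ℚ) :=
  ⋂ E ∈ {E : Finset (Fin t) | ∀ i ∈ u.support, aQ i ∈ posE rQ E}, posE rQ E

/-!
For a monomial `x^u` whose cone is `σ(E)`, the point `∑ uᵢ aᵢ` lies in the relative interior of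
`σ(E)`: writing it as a nonnegative combination `∑ D_k r_k` by expanding each `aᵢ` inside `σ(E)`,
minimality of `σ(E)` puts every `r_k`, `k ∈ E`, into the cone spanned by the `r_k` with `D_k > 0`,
and a small perturbation along `∑_{k ∈ E} r_k` makes all coefficients on `E` positive.
The projection `π` maps relative interiors into relative interiors, and `π (∑ uᵢ aᵢ) = ∑ uᵢ bᵢ`
depends only on the class of `u` modulo `L'`, so for an `L'`-homogeneous `F` all monomials give
the same point, which is then common to all the relative interiors.
-/

open Filter Topology

section Cones

variable {t m : ℕ} {r : Fin t → Fin m → ℚ} {E : Finset (Fin t)}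

lemma mem_posE_self {k : Fin t} (hk : k ∈ E) : r k ∈ posE r E :=
  ⟨Pi.single k 1, fun j => by by_cases h : j = k <;> simp [h],
    fun j hj => Pi.single_eq_of_ne (ne_of_mem_of_not_mem hk hj).symm _,
    by simp [Pi.single_apply]⟩

lemma exists_pos_forall_mul_lt (C D : Fin t → ℚ) (hD : ∀ j, 0 ≤ D j) :
    ∃ ε : ℚ, 0 < ε ∧ ∀ j, D j ≠ 0 → ε * C j < D j := by
  have h : ∀ᶠ ε in 𝓝[>] (0 : ℚ), ∀ j, D j ≠ 0 → ε * C j < D j := by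
    refine eventually_all.2 fun j => ?_
    by_cases hj : D j = 0
    · simp [hj]
    · have hlim : Tendsto (fun ε : ℚ => ε * C j) (𝓝 0) (𝓝 0) := by
        simpa using (continuous_mul_const (C j)).tendsto 0
      exact ((hlim.eventually (gt_mem_nhds ((hD j).lt_of_ne (Ne.symm hj)))).filter_mono
        nhdsWithin_le_nhds).mono fun ε hε _ => hε
  exact (h.and self_mem_nhdsWithin).exists.imp fun ε hε => ⟨hε.2, hε.1⟩

lemma mem_relintE_of_subset_posE {D : Fin t → ℚ} (hD : ∀ j, 0 ≤ D j) (hDE : ∀ j ∉ E, D j = 0)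
    (hr : ∀ k ∈ E, r k ∈ posE r {j | D j ≠ 0}) : ∑ j, D j • r j ∈ relintE r E := by
  classical
  choose! c _ hcS hcr using hr
  set C : Fin t → ℚ := fun j => ∑ k ∈ E, c k j
  have hC : ∀ j, D j = 0 → C j = 0 := fun j hj =>
    Finset.sum_eq_zero fun k hk => hcS k hk j (by simp [hj])
  have hCr : ∑ j, C j • r j = ∑ k ∈ E, r k := by
    simp_rw [C, Finset.sum_smul]
    rw [Finset.sum_comm]
    exact Finset.sum_congr rfl fun k hk => (hcr k hk).symm
  obtain ⟨ε, hε, hεC⟩ := exists_pos_forall_mul_lt C D hD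
  refine ⟨fun j => D j - ε * C j + if j ∈ E then ε else 0, fun j hj => ?_, fun j hj => ?_, ?_⟩
  · by_cases hDj : D j = 0
    · simp [hDj, hC j hDj, hj, hε]
    · have hεCj := hεC j hDj
      simp only [hj, if_true]
      linarith
  · simp [hDE j hj, hC j (hDE j hj), hj]
  · simp_rw [add_smul, sub_smul, Finset.sum_add_distrib, Finset.sum_sub_distrib, ite_smul,
      zero_smul, Finset.sum_ite_mem, Finset.univ_inter, mul_smul, ← Finset.smul_sum, hCr,
      sub_add_cancel]

lemma sum_smul_mem_relintE {ι : Type*} {s : Finset ι} {w : ι → ℚ} (hw : ∀ i ∈ s, 0 < w i)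
    {y : ι → Fin m → ℚ} (hy : ∀ i ∈ s, y i ∈ posE r E)
    (hmin : ∀ E', (∀ i ∈ s, y i ∈ posE r E') → posE r E ⊆ posE r E') :
    ∑ i ∈ s, w i • y i ∈ relintE r E := by
  classical
  choose! e he0 heE hey using hy
  set D : Fin t → ℚ := fun k => ∑ i ∈ s, w i * e i k
  have hsum : ∑ i ∈ s, w i • y i = ∑ k, D k • r k := by
    rw [Finset.sum_congr rfl fun i hi => congrArg (w i • ·) (hey i hi)]
    simp_rw [D, Finset.smul_sum, smul_smul, Finset.sum_smul]
    exact Finset.sum_comm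
  have hsupp : ∀ i ∈ s, ∀ k, e i k ≠ 0 → D k ≠ 0 := fun i hi k hk =>
    (lt_of_lt_of_le (mul_pos (hw i hi) ((he0 i hi k).lt_of_ne (Ne.symm hk)))
      (Finset.single_le_sum (f := fun i => w i * e i k)
        (fun i hi => mul_nonneg (hw i hi).le (he0 i hi k)) hi)).ne'
  have hyD : ∀ i ∈ s, y i ∈ posE r {k | D k ≠ 0} := fun i hi =>
    ⟨e i, he0 i hi, fun k hk => by_contra fun h => hk (by simpa using hsupp i hi k h), hey i hi⟩
  rw [hsum]
  exact mem_relintE_of_subset_posE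
    (fun k => Finset.sum_nonneg fun i hi => mul_nonneg (hw i hi).le (he0 i hi k))
    (fun k hk => Finset.sum_eq_zero fun i hi => by rw [heE i hi k hk, mul_zero])
    (fun k hk => hmin _ hyD (mem_posE_self hk))

lemma sum_smul_mem_relintE_of_coneOf_eq {n : ℕ} {aQ : Fin n → Fin m → ℚ} {u : Fin n →₀ ℕ}
    (h : coneOf aQ r u = posE r E) : ∑ i, (u i : ℚ) • aQ i ∈ relintE r E := by
  rw [← Finset.sum_subset (Finset.subset_univ u.support) fun i _ hi => by
    simp [Finsupp.notMem_support_iff.mp hi]]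
  refine sum_smul_mem_relintE (fun i hi => by simpa [pos_iff_ne_zero] using hi)
    (fun i hi => h ▸ Set.mem_iInter₂.2 fun E' hE' => hE' i hi)
    (fun E' hE' => h ▸ Set.biInter_subset_of_mem hE')

lemma map_mem_relintE {r' : ℕ} (π : (Fin m → ℚ) →ₗ[ℚ] (Fin r' → ℚ)) {x : Fin m → ℚ}
    (hx : x ∈ relintE r E) : π x ∈ relintE (fun i => π (r i)) E := by
  obtain ⟨d, hd, hdE, rfl⟩ := hx
  exact ⟨d, hd, hdE, by simp⟩

end Cones

lemma sum_smul_castQ_eq_zero {n r' : ℕ} {b : Fin n → Fin r' → ℤ} {u : Fin n → ℤ}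
    (h : ∑ i, u i • b i = 0) : ∑ i, (u i : ℚ) • castQ b i = 0 := by
  funext j
  simpa [castQ, Finset.sum_apply] using congrArg (fun v : Fin r' → ℤ => (v j : ℚ)) h

lemma map_sum_smul_eq_of_isLHomog {K : Type*} [CommSemiring K] {n m r' : ℕ}
    {L : Set (Fin n → ℤ)} {aQ : Fin n → Fin m → ℚ} {b : Fin n → Fin r' → ℤ}
    (hb : ∀ u ∈ L, ∑ i, u i • b i = 0) {π : (Fin m → ℚ) →ₗ[ℚ] (Fin r' → ℚ)}
    (hπ : ∀ i, π (aQ i) = castQ b i) {F : MvPolynomial (Fin n) K} (hF : IsLHomog L F)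
    {u v : Fin n →₀ ℕ} (hu : u ∈ F.support) (hv : v ∈ F.support) :
    π (∑ i, (u i : ℚ) • aQ i) = π (∑ i, (v i : ℚ) • aQ i) := by
  rw [← sub_eq_zero, ← map_sub, ← Finset.sum_sub_distrib, map_sum]
  simp_rw [← sub_smul, map_smul, hπ]
  simpa using sum_smul_castQ_eq_zero (hb _ (hF u hu v hv))

theorem stmt15_general {K : Type*} [Field K] {n m t f r' : ℕ}
    (L' : AddSubgroup (Fin n → ℤ))
    (a : Fin n → Fin m → ℤ)
    (b : Fin n → Fin r' → ℤ)
    (hB : ∀ u : Fin n → ℤ, u ∈ satSet L' ↔ ∑ i, u i • b i = 0)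
    (rvec : Fin t → Fin m → ℤ)
    (𝔼 : Fin f → Finset (Fin t))
    (π : (Fin m → ℚ) →ₗ[ℚ] (Fin r' → ℚ))
    (hπ : ∀ i, π (castQ a i) = castQ b i)
    (F : MvPolynomial (Fin n) K) (hF : IsLHomog (L' : Set (Fin n → ℤ)) F) :
    DFace (fun i => π (castQ rvec i)) 𝔼
      {j : Fin f | ∃ u ∈ F.support,
        coneOf (castQ a) (castQ rvec) u = posE (castQ rvec) (𝔼 j)} := by
  have hb : ∀ u ∈ (L' : Set (Fin n → ℤ)), ∑ i, u i • b i = 0 := fun u hu =>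
    (hB u).1 ⟨1, one_ne_zero, by simpa using hu⟩
  rcases Set.eq_empty_or_nonempty {j : Fin f | ∃ u ∈ F.support,
      coneOf (castQ a) (castQ rvec) u = posE (castQ rvec) (𝔼 j)} with hT | ⟨-, u₀, hu₀, -⟩
  · unfold DFace
    rw [hT]
    simp
  · refine ⟨π (∑ i, (u₀ i : ℚ) • castQ a i), Set.mem_iInter₂.2 ?_⟩
    rintro j ⟨u, hu, hcone⟩
    rw [map_sum_smul_eq_of_isLHomog hb hπ hF hu₀ hu]
    exact map_mem_relintE π (sum_smul_mem_relintE_of_coneOf_eq hcone)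

/-- if `F` is `L'`-homogeneous then `D_{L'}^L(F)` is a simplex:
its whole vertex set is a face of `D_{L'}^L`. -/
theorem stmt15 {K : Type*} [Field K] {n m t f r' : ℕ}
    (L L' : AddSubgroup (Fin n → ℤ))
    (hLpos : ∀ u ∈ L, (∀ i, 0 ≤ u i) → u = (0 : Fin n → ℤ))
    (hLL' : L ≤ L')
    (a : Fin n → Fin m → ℤ)
    (hA : ∀ u : Fin n → ℤ, u ∈ satSet L ↔ ∑ i, u i • a i = 0)
    (b : Fin n → Fin r' → ℤ)
    (hB : ∀ u : Fin n → ℤ, u ∈ satSet L' ↔ ∑ i, u i • b i = 0)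
    (rvec : Fin t → Fin m → ℤ)
    (hr0 : ∀ i, castQ rvec i ≠ 0)
    (hray : ∀ i, IsFaceOf (posQ (castQ a)) (rayOf (castQ rvec i)))
    (hrinj : ∀ i j : Fin t, rayOf (castQ rvec i) = rayOf (castQ rvec j) → i = j)
    (hspan : posQ (castQ a) = posQ (castQ rvec))
    (𝔼 : Fin f → Finset (Fin t))
    (hE1 : ∀ j : Fin f, ¬ IsFaceOf (posQ (castQ a)) (posE (castQ rvec) (𝔼 j)))
    (hE2 : ∀ (j : Fin f) (E : Finset (Fin t)),
      ¬ IsFaceOf (posQ (castQ a)) (posE (castQ rvec) E) →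
      posE (castQ rvec) E ⊆ posE (castQ rvec) (𝔼 j) →
      posE (castQ rvec) E = posE (castQ rvec) (𝔼 j))
    (hE3 : ∀ E : Finset (Fin t), ¬ IsFaceOf (posQ (castQ a)) (posE (castQ rvec) E) →
      ∃ j : Fin f, posE (castQ rvec) (𝔼 j) ⊆ posE (castQ rvec) E)
    (hEinj : ∀ j k : Fin f, posE (castQ rvec) (𝔼 j) = posE (castQ rvec) (𝔼 k) → j = k)
    (π : (Fin m → ℚ) →ₗ[ℚ] (Fin r' → ℚ))
    (hπ : ∀ i, π (castQ a i) = castQ b i)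
    (F : MvPolynomial (Fin n) K) (hF : IsLHomog (L' : Set (Fin n → ℤ)) F) :
    DFace (fun i => π (castQ rvec i)) 𝔼
      {j : Fin f | ∃ u ∈ F.support,
        coneOf (castQ a) (castQ rvec) u = posE (castQ rvec) (𝔼 j)} :=
  stmt15_general L' a b hB rvec 𝔼 π hπ F hF
end

section
/- With the notation of the geometric setup: if F_1,…,F_s ∈ K[x_1,…,x_n] are L'-homogeneous polynomials with rad(I_L) = rad((F_1,…,F_s)), then ⋃_{i=1}^{s} D_{L'}^{L}(F_i) is a spanning subcomplex of D_{L'}^{L} (every vertex 𝔼_j lies in some D_{L'}^{L}(F_i)) and each D_{L'}^{L}(F_i) is a simplex (its whole vertex set is a face of D_{L'}^{L}). -/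
open MvPolynomial

/-!
Spanning. Let `E` be a minimal non-face, so that every proper subcone `σ(κ)`, `κ ⊊ E`, is a face,
and let `S` be the set of `i` with `aᵢ` in some proper subcone. Call `T ⊆ {1,…,n}` sign-closed
for `L` if for every `u ∈ L` the support of `u⁺` lies in `T` exactly when that of `u⁻` does.
The indicator vector `1_T` is a zero of `I_L` iff `T` is sign-closed, and by Farkas' lemma the
sign-closed sets are exactly the sets `{i | aᵢ ∈ τ}` of faces `τ` of `σ`. As
`σ(E) = pos(aᵢ : i ∈ S)` is not a face, `1_S` is not a zero of `I_L`, hence not a zero of some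
`F_k`. If no monomial of `F_k` had cone `σ(E)`, every monomial of `F_k` supported in `S` would be
supported in a single face `σ(κ)`, and inclusion–exclusion would write `F_k(1_S)` as an
alternating sum of values of `F_k` at indicator vectors of intersections of faces, all zero.

Simplex. All monomials `x^u` of an `L'`-homogeneous `F` have the same `B`-degree
`β = π(∑ uᵢ aᵢ)`. If `cone(x^u) = σ(𝔼_j)`, then `∑ uᵢ aᵢ` lies in the relative interior of
`σ(𝔼_j)`, so `β` lies in the relative interior of `π(σ(𝔼_j))` for every such `j`.
-/

section Farkas

lemma sum_insert_update_smul {R M ι : Type*} [Semiring R] [AddCommMonoid M] [Module R M]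
    [DecidableEq ι] {s : Finset ι} {a : ι} (ha : a ∉ s) (d : ι → R) (μ : R) (v : ι → M) :
    ∑ i ∈ insert a s, Function.update d a μ i • v i = μ • v a + ∑ i ∈ s, d i • v i := by
  rw [Finset.sum_insert ha, Function.update_self]
  congr 1
  exact Finset.sum_congr rfl fun i hi => by rw [Function.update_of_ne (ne_of_mem_of_not_mem hi ha)]

lemma update_nonneg_of_mem_insert {R ι : Type*} [Zero R] [LE R] [DecidableEq ι] {s : Finset ι}
    {a : ι} {d : ι → R} {μ : R}
    (hd : ∀ i ∈ s, 0 ≤ d i) (hμ : 0 ≤ μ) : ∀ i ∈ insert a s, 0 ≤ Function.update d a μ i := by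
  intro i hi
  by_cases hia : i = a
  · rwa [hia, Function.update_self]
  · rw [Function.update_of_ne hia]
    exact hd i ((Finset.mem_insert.1 hi).resolve_left hia)

variable {𝕜 V ι : Type*} [Field 𝕜] [LinearOrder 𝕜] [IsStrictOrderedRing 𝕜]
  [AddCommGroup V] [Module 𝕜 V]

/-- Farkas' lemma, by Fourier–Motzkin elimination of one vector at a time. -/
theorem exists_dual_nonneg_of_not_mem_cone (s : Finset ι) (v : ι → V) (b : V)
    (hb : ∀ d : ι → 𝕜, (∀ i ∈ s, 0 ≤ d i) → b ≠ ∑ i ∈ s, d i • v i) :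
    ∃ f : Module.Dual 𝕜 V, (∀ i ∈ s, 0 ≤ f (v i)) ∧ f b < 0 := by
  classical
  induction s using Finset.induction_on generalizing v b with
  | empty =>
    have hb0 : b ≠ 0 := by simpa using hb 0
    obtain ⟨f, hf⟩ : ∃ f : Module.Dual 𝕜 V, f b ≠ 0 := by
      by_contra! h
      exact hb0 ((Module.forall_dual_apply_eq_zero_iff 𝕜 b).1 h)
    rcases hf.lt_or_gt with hf | hf
    · exact ⟨f, by simp, hf⟩
    · exact ⟨-f, by simp, by simpa using hf⟩
  | insert a s ha ih =>
    obtain ⟨c, hc, hcb⟩ := ih v b fun d hd h => hb (Function.update d a 0)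
      (update_nonneg_of_mem_insert hd le_rfl) (by rw [sum_insert_update_smul ha, h]; simp)
    by_cases hca : 0 ≤ c (v a)
    · exact ⟨c, Finset.forall_mem_insert _ _ _ |>.2 ⟨hca, hc⟩, hcb⟩
    push Not at hca
    set p : V →ₗ[𝕜] V := LinearMap.id - (c (v a))⁻¹ • c.smulRight (v a) with hp
    have hp_apply : ∀ x, p x = x - (c x / c (v a)) • v a := fun x => by
      simp [hp, div_eq_inv_mul, mul_smul]
    have hpa : p (v a) = 0 := by rw [hp_apply, div_self hca.ne, one_smul, sub_self]
    obtain ⟨f, hf, hfb⟩ := ih (p ∘ v) (p b) fun d hd h => by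
      set μ := c (b - ∑ i ∈ s, d i • v i) / c (v a)
      have hμ : 0 < μ := by
        refine div_pos_of_neg_of_neg ?_ hca
        have : 0 ≤ ∑ i ∈ s, c (d i • v i) := Finset.sum_nonneg fun i hi => by
          rw [map_smul, smul_eq_mul]; exact mul_nonneg (hd i hi) (hc i hi)
        rw [map_sub, map_sum]
        linarith
      have hker : b - ∑ i ∈ s, d i • v i = μ • v a := by
        have h' : p (b - ∑ i ∈ s, d i • v i) = 0 := by
          simp only [map_sub, map_sum, map_smul, Function.comp_apply] at h ⊢
          rw [h, sub_self]
        rwa [hp_apply, sub_eq_zero] at h'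
      refine hb (Function.update d a μ) (update_nonneg_of_mem_insert hd hμ.le) ?_
      rw [sum_insert_update_smul ha, ← hker, sub_add_cancel]
    exact ⟨f ∘ₗ p, Finset.forall_mem_insert _ _ _ |>.2 ⟨by simp [hpa], hf⟩, hfb⟩

end Farkas

section Cones

variable {m t : ℕ}

lemma mem_posQ_self {n : ℕ} (v : Fin n → Fin m → ℚ) (i : Fin n) : v i ∈ posQ v :=
  ⟨Pi.single i 1, fun j => by by_cases h : j = i <;> simp [h], by simp [Pi.single_apply]⟩

lemma mem_posE_of_mem (r : Fin t → Fin m → ℚ) {E : Finset (Fin t)} {k : Fin t} (hk : k ∈ E) :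
    r k ∈ posE r E :=
  ⟨Pi.single k 1, fun j => by by_cases h : j = k <;> simp [h],
    fun j hj => by simp [show j ≠ k from fun h => hj (h ▸ hk)],
    by simp [Pi.single_apply]⟩

lemma zero_mem_posE (r : Fin t → Fin m → ℚ) (E : Finset (Fin t)) : 0 ∈ posE r E :=
  ⟨0, fun _ => le_rfl, fun _ _ => rfl, by simp⟩

lemma add_mem_posE {r : Fin t → Fin m → ℚ} {E : Finset (Fin t)} {x y : Fin m → ℚ}
    (hx : x ∈ posE r E) (hy : y ∈ posE r E) : x + y ∈ posE r E := by
  obtain ⟨d, hd, hdE, rfl⟩ := hx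
  obtain ⟨e, he, heE, rfl⟩ := hy
  exact ⟨d + e, fun i => add_nonneg (hd i) (he i), fun i hi => by simp [hdE i hi, heE i hi],
    by simp [add_smul, Finset.sum_add_distrib]⟩

lemma smul_mem_posE {r : Fin t → Fin m → ℚ} {E : Finset (Fin t)} {x : Fin m → ℚ} {q : ℚ}
    (hq : 0 ≤ q) (hx : x ∈ posE r E) : q • x ∈ posE r E := by
  obtain ⟨d, hd, hdE, rfl⟩ := hx
  exact ⟨q • d, fun i => mul_nonneg hq (hd i), fun i hi => by simp [hdE i hi],
    by simp [Finset.smul_sum, smul_smul]⟩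

lemma sum_mem_posE {ι : Type*} {r : Fin t → Fin m → ℚ} {E : Finset (Fin t)} (s : Finset ι)
    {f : ι → Fin m → ℚ} (h : ∀ i ∈ s, f i ∈ posE r E) : ∑ i ∈ s, f i ∈ posE r E :=
  Finset.sum_induction f (· ∈ posE r E) (fun _ _ => add_mem_posE) (zero_mem_posE r E) h

lemma posE_subset_of_forall_mem {t' : ℕ} {r : Fin t → Fin m → ℚ} {r' : Fin t' → Fin m → ℚ}
    {E : Finset (Fin t)} {E' : Finset (Fin t')} (h : ∀ k ∈ E, r k ∈ posE r' E') :
    posE r E ⊆ posE r' E' := by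
  rintro _ ⟨d, hd, hdE, rfl⟩
  refine sum_mem_posE _ fun k _ => ?_
  by_cases hk : k ∈ E
  · exact smul_mem_posE (hd k) (h k hk)
  · simpa [hdE k hk] using zero_mem_posE r' E'

lemma posE_mono (r : Fin t → Fin m → ℚ) {E E' : Finset (Fin t)} (h : E ⊆ E') :
    posE r E ⊆ posE r E' :=
  posE_subset_of_forall_mem fun _ hk => mem_posE_of_mem r (h hk)

lemma mem_rayOf_self (x : Fin m → ℚ) : x ∈ rayOf x := ⟨1, zero_le_one, (one_smul _ _).symm⟩

lemma posE_singleton (r : Fin t → Fin m → ℚ) (k : Fin t) : posE r {k} = rayOf (r k) := by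
  ext x
  constructor
  · rintro ⟨d, hd, hdk, rfl⟩
    refine ⟨d k, hd k, Finset.sum_eq_single k (fun l _ hl => ?_) (by simp)⟩
    rw [hdk l (by simpa using hl), zero_smul]
  · rintro ⟨q, hq, rfl⟩
    exact smul_mem_posE hq (mem_posE_of_mem r (Finset.mem_singleton_self k))

lemma rayOf_smul {x : Fin m → ℚ} {q : ℚ} (hq : 0 < q) : rayOf (q • x) = rayOf x := by
  ext y
  constructor
  · rintro ⟨p, hp, rfl⟩
    exact ⟨p * q, mul_nonneg hp hq.le, smul_smul _ _ _⟩
  · rintro ⟨p, hp, rfl⟩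
    exact ⟨p / q, div_nonneg hp hq.le, by rw [smul_smul, div_mul_cancel₀ _ hq.ne']⟩

lemma dotProduct_sum_smul {ι : Type*} [Fintype ι] (c : Fin m → ℚ) (d : ι → ℚ)
    (g : ι → Fin m → ℚ) : c ⬝ᵥ ∑ i, d i • g i = ∑ i, d i * (c ⬝ᵥ g i) := by
  simp [dotProduct_sum, dotProduct_smul]

end Cones

section Faces

variable {m : ℕ}

lemma IsFaceOf.mem_of_sum_smul_mem {ι : Type*} [Fintype ι] {σ τ : Set (Fin m → ℚ)}
    (hτ : IsFaceOf σ τ) {g : ι → Fin m → ℚ} (hg : ∀ i, g i ∈ σ) {d : ι → ℚ}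
    (hd : ∀ i, 0 ≤ d i) (hx : ∑ i, d i • g i ∈ τ) {i : ι} (hi : 0 < d i) : g i ∈ τ := by
  obtain ⟨c, hc, rfl⟩ := hτ
  have h0 : ∑ j, d j * (c ⬝ᵥ g j) = 0 := by rw [← dotProduct_sum_smul]; exact hx.2
  have hterms := (Finset.sum_eq_zero_iff_of_nonneg fun j _ => mul_nonneg (hd j) (hc _ (hg j))).1
    h0 i (Finset.mem_univ i)
  exact ⟨hg i, (mul_eq_zero.1 hterms).resolve_left hi.ne'⟩

lemma IsFaceOf.exists_mem_of_sum_smul_mem {ι : Type*} [Fintype ι] {σ τ : Set (Fin m → ℚ)}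
    (hτ : IsFaceOf σ τ) {g : ι → Fin m → ℚ} (hg : ∀ i, g i ∈ σ) {d : ι → ℚ}
    (hd : ∀ i, 0 ≤ d i) (hx : ∑ i, d i • g i ∈ τ) (hx0 : ∑ i, d i • g i ≠ 0) :
    ∃ i, 0 < d i ∧ g i ≠ 0 ∧ g i ∈ τ := by
  obtain ⟨i, -, hi⟩ := Finset.exists_ne_zero_of_sum_ne_zero hx0
  have hdi : 0 < d i := (hd i).lt_of_ne' (left_ne_zero_of_smul hi)
  exact ⟨i, hdi, right_ne_zero_of_smul hi, hτ.mem_of_sum_smul_mem hg hd hx hdi⟩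

lemma IsFaceOf.sum_smul_mem {n : ℕ} {v : Fin n → Fin m → ℚ} {τ : Set (Fin m → ℚ)}
    (hτ : IsFaceOf (posQ v) τ) {d : Fin n → ℚ} (hd : ∀ i, 0 ≤ d i)
    (hv : ∀ i, 0 < d i → v i ∈ τ) : ∑ i, d i • v i ∈ τ := by
  obtain ⟨c, -, rfl⟩ := hτ
  refine ⟨⟨d, hd, rfl⟩, ?_⟩
  show c ⬝ᵥ _ = 0
  rw [dotProduct_sum_smul]
  refine Finset.sum_eq_zero fun i _ => ?_
  rcases (hd i).lt_or_eq with hi | hi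
  · rw [show c ⬝ᵥ v i = 0 from (hv i hi).2, mul_zero]
  · rw [← hi, zero_mul]

lemma exists_pos_smul_eq_of_isFaceOf_rayOf {n : ℕ} {v : Fin n → Fin m → ℚ} {x : Fin m → ℚ}
    (hray : IsFaceOf (posQ v) (rayOf x)) (hx : x ∈ posQ v) (hx0 : x ≠ 0) :
    ∃ i, ∃ q : ℚ, 0 < q ∧ v i = q • x := by
  obtain ⟨d, hd, rfl⟩ := hx
  obtain ⟨i, -, hvi, q, hq, hiq⟩ :=
    hray.exists_mem_of_sum_smul_mem (mem_posQ_self v) hd (mem_rayOf_self _) hx0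
  exact ⟨i, q, hq.lt_of_ne' (by rintro rfl; simp [hiq] at hvi), hiq⟩

variable {t : ℕ} {σ : Set (Fin m → ℚ)} {r : Fin t → Fin m → ℚ}

lemma mem_of_mem_posE_of_isFaceOf_rayOf (hr0 : ∀ k, r k ≠ 0) (hrσ : ∀ k, r k ∈ σ)
    (hray : ∀ k, IsFaceOf σ (rayOf (r k)))
    (hrinj : ∀ k l, rayOf (r k) = rayOf (r l) → k = l) {k : Fin t} {E : Finset (Fin t)}
    (hk : r k ∈ posE r E) : k ∈ E := by
  obtain ⟨d, hd, hdE, hkd⟩ := hk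
  obtain ⟨l, hdl, hrl, q, hq, hlq⟩ := (hray k).exists_mem_of_sum_smul_mem hrσ hd
    (hkd ▸ mem_rayOf_self _) (hkd ▸ hr0 k)
  have hq : 0 < q := hq.lt_of_ne' (by rintro rfl; simp [hlq] at hrl)
  obtain rfl : l = k := hrinj l k (by rw [hlq, rayOf_smul hq])
  by_contra hkE
  exact hdl.ne' (hdE l hkE)

lemma IsFaceOf.mem_posE_inter (hrσ : ∀ k, r k ∈ σ)
    (hext : ∀ k E, r k ∈ posE r E → k ∈ E) {κ E : Finset (Fin t)}
    (hκ : IsFaceOf σ (posE r κ)) {x : Fin m → ℚ} (hxκ : x ∈ posE r κ) (hxE : x ∈ posE r E) :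
    x ∈ posE r (κ ∩ E) := by
  obtain ⟨d, hd, hdE, rfl⟩ := hxE
  refine ⟨d, hd, fun k hk => ?_, rfl⟩
  by_contra hdk
  have hpos : 0 < d k := (hd k).lt_of_ne' hdk
  have hkκ := hext k κ (hκ.mem_of_sum_smul_mem hrσ hd hxκ hpos)
  exact hk (Finset.mem_inter.2 ⟨hkκ, by_contra fun hkE => hdk (hdE k hkE)⟩)

end Faces

def SignClosed {R : Type*} [Zero R] [LT R] {n : ℕ} (S : Set (Fin n → R)) (T : Set (Fin n)) :
    Prop :=
  ∀ u ∈ S, (∀ i, 0 < u i → i ∈ T) → ∀ i, u i < 0 → i ∈ T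

def kerQ {n m : ℕ} (v : Fin n → Fin m → ℚ) : Set (Fin n → ℚ) := {x | ∑ i, x i • v i = 0}

lemma SignClosed.biInter {R ι : Type*} [Zero R] [LT R] {n : ℕ} {S : Set (Fin n → R)}
    {R' : Set ι} {T : ι → Set (Fin n)} (h : ∀ κ ∈ R', SignClosed S (T κ)) :
    SignClosed S (⋂ κ ∈ R', T κ) := fun u hu hpos i hi =>
  Set.mem_iInter₂.2 fun κ hκ => h κ hκ u hu (fun j hj => Set.mem_iInter₂.1 (hpos j hj) κ hκ) i hi

section SignClosedFaces

variable {n m : ℕ} {v : Fin n → Fin m → ℚ}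

lemma isFaceOf_of_dual {σ τ : Set (Fin m → ℚ)} (f : Module.Dual ℚ (Fin m → ℚ))
    (hf : ∀ x ∈ σ, 0 ≤ f x) (hτ : τ = σ ∩ {x | f x = 0}) : IsFaceOf σ τ := by
  have hf_apply : ∀ x, ∑ j, f (fun k => if j = k then 1 else 0) * x j = f x := fun x => by
    rw [LinearMap.pi_apply_eq_sum_univ f x]; simp [mul_comm]
  exact ⟨fun j => f (fun k => if j = k then 1 else 0), by simpa [hf_apply] using hf,
    by simpa [hf_apply] using hτ⟩

lemma IsFaceOf.signClosed {τ : Set (Fin m → ℚ)} (hτ : IsFaceOf (posQ v) τ) :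
    SignClosed (kerQ v) {i | v i ∈ τ} := by
  intro x hx hpos i hi
  have hsplit : ∑ i, max (x i) 0 • v i = ∑ i, max (-x i) 0 • v i := by
    rw [← sub_eq_zero, ← Finset.sum_sub_distrib]
    have hx : ∑ i, x i • v i = 0 := hx
    simp only [← sub_smul, max_zero_sub_max_neg_zero_eq_self]
    exact hx
  have hmem : ∑ i, max (x i) 0 • v i ∈ τ := hτ.sum_smul_mem (fun _ => le_max_right _ _)
    fun j hj => hpos j (by simpa using hj)
  exact hτ.mem_of_sum_smul_mem (d := fun k => max (-x k) 0) (mem_posQ_self v)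
    (fun _ => le_max_right _ _) (hsplit ▸ hmem) (lt_max_of_lt_left (neg_pos.2 hi))

lemma SignClosed.exists_dual {T : Set (Fin n)} (hT : SignClosed (kerQ v) T) {j : Fin n}
    (hj : j ∉ T) : ∃ f : Module.Dual ℚ (Fin m → ℚ),
      (∀ i, 0 ≤ f (v i)) ∧ (∀ i ∈ T, f (v i) = 0) ∧ 0 < f (v j) := by
  classical
  set g : Fin n ⊕ Fin n → Fin m → ℚ := Sum.elim v fun i => if i ∈ T then -v i else 0
  -- a cone relation for `-v j` would be a kernel vector, nonnegative off `T`, positive at `j`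
  have hb : ∀ d : Fin n ⊕ Fin n → ℚ, (∀ k ∈ Finset.univ, 0 ≤ d k) →
      -v j ≠ ∑ k ∈ Finset.univ, d k • g k := by
    intro d hd hdj
    set x : Fin n → ℚ := fun i =>
      d (.inl i) - (if i ∈ T then d (.inr i) else 0) + (Pi.single j 1 : Fin n → ℚ) i
    have hx : -x ∈ kerQ v := by
      have : ∑ i, x i • v i = ∑ k, d k • g k + v j := by
        simp only [x, g, add_smul, Finset.sum_add_distrib, Fintype.sum_sum_type, Sum.elim_inl,
          Sum.elim_inr, sub_eq_add_neg]
        congr 2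
        · exact Finset.sum_congr rfl fun i _ => by split_ifs <;> simp
        · simp [Pi.single_apply]
      show ∑ i, -x i • v i = 0
      simp only [neg_smul, Finset.sum_neg_distrib, this, ← hdj, neg_add_cancel, neg_zero]
    refine hj (hT _ hx (fun i hi => ?_) j ?_)
    · by_contra hiT
      have : 0 ≤ x i := by
        simp only [x, if_neg hiT, sub_zero]
        exact add_nonneg (hd _ (Finset.mem_univ _)) (by by_cases h : i = j <;> simp [h])
      simp only [Pi.neg_apply] at hi
      linarith
    · simp only [x, if_neg hj, sub_zero, Pi.single_eq_same, Pi.neg_apply, neg_neg_iff_pos]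
      linarith [hd (.inl j) (Finset.mem_univ _)]
  obtain ⟨f, hf, hfj⟩ := exists_dual_nonneg_of_not_mem_cone Finset.univ g (-v j) hb
  refine ⟨f, fun i => by simpa [g] using hf (.inl i), fun i hi => ?_, by simpa using hfj⟩
  have := hf (.inr i) (Finset.mem_univ _)
  simp only [g, Sum.elim_inr, if_pos hi, map_neg] at this
  exact le_antisymm (by linarith) (by simpa [g] using hf (.inl i))

lemma SignClosed.isFaceOf_posE {T : Finset (Fin n)} (hT : SignClosed (kerQ v) T) :
    IsFaceOf (posQ v) (posE v T) := by
  classical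
  choose! f hf hfT hfj using fun j (hj : j ∉ T) => hT.exists_dual (by simpa using hj)
  set F := ∑ j ∈ Tᶜ, f j
  have hF : ∀ i, 0 ≤ F (v i) := fun i => by
    simpa [F] using Finset.sum_nonneg fun j hj => hf j (by simpa using hj) i
  have hFT : ∀ i ∈ T, F (v i) = 0 := fun i hi => by
    simpa [F] using Finset.sum_eq_zero fun j hj => hfT j (by simpa using hj) i hi
  have hFpos : ∀ i ∉ T, 0 < F (v i) := fun i hi => by
    simpa [F] using Finset.sum_pos' (fun j hj => hf j (by simpa using hj) i)
      ⟨i, by simpa using hi, hfj i hi⟩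
  have hF_sum : ∀ d : Fin n → ℚ, F (∑ i, d i • v i) = ∑ i, d i * F (v i) := fun d => by
    simp [map_sum]
  refine isFaceOf_of_dual F ?_ (Set.ext fun x => ⟨?_, ?_⟩)
  · rintro _ ⟨d, hd, rfl⟩
    rw [hF_sum]
    exact Finset.sum_nonneg fun i _ => mul_nonneg (hd i) (hF i)
  · rintro ⟨d, hd, hdT, rfl⟩
    refine ⟨⟨d, hd, rfl⟩, ?_⟩
    show F _ = 0
    rw [hF_sum]
    refine Finset.sum_eq_zero fun i _ => ?_
    by_cases hi : i ∈ T
    · rw [hFT i hi, mul_zero]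
    · rw [hdT i hi, zero_mul]
  · rintro ⟨⟨d, hd, rfl⟩, hx⟩
    have hx : ∑ i, d i * F (v i) = 0 := (hF_sum d).symm.trans hx
    refine ⟨d, hd, fun i hi => ?_, rfl⟩
    have := (Finset.sum_eq_zero_iff_of_nonneg fun i _ => mul_nonneg (hd i) (hF i)).1 hx i
      (Finset.mem_univ i)
    exact (mul_eq_zero.1 this).resolve_right (hFpos i hi).ne'

end SignClosedFaces

section Indicator

open Finset

variable {K : Type*} {n : ℕ}

lemma prod_indicator_pow [CommSemiring K] (T : Set (Fin n)) (u : Fin n →₀ ℕ) :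
    (u.prod fun i e => T.indicator (1 : Fin n → K) i ^ e) =
      {u : Fin n →₀ ℕ | ↑u.support ⊆ T}.indicator 1 u := by
  classical
  rw [Finsupp.prod, Set.indicator_apply]
  split_ifs with h
  · exact Finset.prod_eq_one fun i hi => by simp [Set.indicator_of_mem (h hi)]
  · obtain ⟨i, hi, hiT⟩ := Set.not_subset.1 h
    exact Finset.prod_eq_zero hi (by simp [hiT, Finsupp.mem_support_iff.1 hi])

lemma eval_indicator_monomial [CommSemiring K] (T : Set (Fin n)) (u : Fin n →₀ ℕ) (c : K) :
    eval (T.indicator 1) (monomial u c) = c * {u : Fin n →₀ ℕ | ↑u.support ⊆ T}.indicator 1 u := by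
  rw [eval_monomial, prod_indicator_pow]

lemma eval_indicator [CommSemiring K] (T : Set (Fin n)) (G : MvPolynomial (Fin n) K) :
    eval (T.indicator 1) G =
      ∑ u ∈ G.support, {u : Fin n →₀ ℕ | ↑u.support ⊆ T}.indicator (fun u => coeff u G) u := by
  classical
  rw [eval_eq]
  refine Finset.sum_congr rfl fun u _ => ?_
  rw [← Finsupp.prod, prod_indicator_pow, Set.indicator_apply, Set.indicator_apply]
  split_ifs <;> simp

lemma coe_support_posPart_subset_iff {u : Fin n → ℤ} {T : Set (Fin n)} :
    ↑(posPart u : Fin n →₀ ℕ).support ⊆ T ↔ ∀ i, 0 < u i → i ∈ T := by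
  simp [Set.subset_def, _root_.posPart]

lemma signClosed_iff_latticeIdeal_le_ker [CommRing K] [Nontrivial K]
    (L : AddSubgroup (Fin n → ℤ)) (T : Set (Fin n)) :
    SignClosed (L : Set (Fin n → ℤ)) T ↔ latticeIdeal K L ≤ RingHom.ker (eval (T.indicator 1)) := by
  have hbinomial : ∀ u : Fin n → ℤ,
      eval (T.indicator 1) (monomial (posPart u) (1 : K) - monomial (posPart (-u)) 1) = 0 ↔
        ((∀ i, 0 < u i → i ∈ T) ↔ ∀ i, u i < 0 → i ∈ T) := fun u => by
    classical
    rw [map_sub, eval_indicator_monomial, eval_indicator_monomial, sub_eq_zero]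
    simp only [Set.indicator_apply, Set.mem_ofPred_eq, coe_support_posPart_subset_iff,
      Pi.neg_apply, neg_pos, Pi.one_apply, one_mul]
    split_ifs <;> simp only [one_ne_zero, zero_ne_one, true_iff, false_iff] <;> tauto
  constructor
  · intro hT
    rw [latticeIdeal, Ideal.span_le]
    rintro _ ⟨u, hu, rfl⟩
    exact (hbinomial u).2 ⟨hT u hu, fun h i hi =>
      hT (-u) (neg_mem hu) (fun j hj => h j (neg_pos.1 hj)) i (neg_lt_zero.2 hi)⟩
  · intro hle u hu hpos
    exact ((hbinomial u).1 (hle (Ideal.subset_span ⟨u, hu, rfl⟩))).1 hpos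

lemma le_ker_iff_of_radical_eq {R S : Type*} [CommRing R] [CommRing S] [IsDomain S]
    (φ : R →+* S) {I J : Ideal R} (h : I.radical = J.radical) :
    I ≤ RingHom.ker φ ↔ J ≤ RingHom.ker φ := by
  rw [← (RingHom.ker_isPrime φ).radical_le_iff, h, (RingHom.ker_isPrime φ).radical_le_iff]

lemma signClosed_iff_forall_eval_eq_zero [Field K] {L : AddSubgroup (Fin n → ℤ)} {s : ℕ}
    {F : Fin s → MvPolynomial (Fin n) K}
    (hrad : (latticeIdeal K L).radical = (Ideal.span (Set.range F)).radical) (T : Set (Fin n)) :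
    SignClosed (L : Set (Fin n → ℤ)) T ↔ ∀ k, eval (T.indicator 1) (F k) = 0 := by
  rw [signClosed_iff_latticeIdeal_le_ker (K := K), le_ker_iff_of_radical_eq _ hrad, Ideal.span_le,
    Set.range_subset_iff]
  rfl

/-- Inclusion–exclusion over the sets of monomials supported in the `T κ`. -/
lemma eval_indicator_eq_zero_of_cover [CommRing K] {ι : Type*} (G : MvPolynomial (Fin n) K)
    (U : Set (Fin n)) (𝒦 : Finset ι) (T : ι → Set (Fin n)) (hTU : ∀ κ ∈ 𝒦, T κ ⊆ U)
    (hcover : ∀ u ∈ G.support, ↑u.support ⊆ U → ∃ κ ∈ 𝒦, ↑u.support ⊆ T κ)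
    (hzero : ∀ R ⊆ 𝒦, R.Nonempty → eval ((⋂ κ ∈ R, T κ).indicator 1) G = 0) :
    eval (U.indicator 1) G = 0 := by
  classical
  set M : Set (Fin n) → Set (Fin n →₀ ℕ) := fun T => {u | ↑u.support ⊆ T}
  set c : (Fin n →₀ ℕ) → K := fun u => coeff u G
  have hU : ∀ u ∈ G.support, (M U).indicator c u = (⋃ κ ∈ 𝒦, M (T κ)).indicator c u := by
    intro u hu
    have : u ∈ M U ↔ u ∈ ⋃ κ ∈ 𝒦, M (T κ) := by
      simp only [M, Set.mem_iUnion, Set.mem_ofPred_eq, exists_prop]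
      exact ⟨hcover u hu, fun ⟨κ, hκ, h⟩ => h.trans (hTU κ hκ)⟩
    simp only [Set.indicator_apply, this]
  have hM : ∀ R : Finset ι, ⋂ κ ∈ R, M (T κ) = M (⋂ κ ∈ R, T κ) := fun R => by
    ext u; simp [M, Set.subset_iInter_iff]
  calc eval (U.indicator 1) G = ∑ u ∈ G.support, (M U).indicator c u := eval_indicator U G
    _ = ∑ u ∈ G.support, ∑ R ∈ 𝒦.powerset with R.Nonempty,
          (-1 : ℤ) ^ (#R + 1) • (⋂ κ ∈ R, M (T κ)).indicator c u := by
      refine Finset.sum_congr rfl fun u hu => ?_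
      rw [hU u hu, Finset.indicator_biUnion_eq_sum_powerset]
    _ = ∑ R ∈ 𝒦.powerset with R.Nonempty,
          (-1 : ℤ) ^ (#R + 1) • eval ((⋂ κ ∈ R, T κ).indicator 1) G := by
      rw [Finset.sum_comm]
      refine Finset.sum_congr rfl fun R _ => ?_
      rw [← Finset.smul_sum, hM, eval_indicator]
    _ = 0 := Finset.sum_eq_zero fun R hR => by
      rw [Finset.mem_filter, Finset.mem_powerset] at hR
      rw [hzero R hR.1 hR.2, smul_zero]

end Indicator

section Saturation

variable {n m : ℕ}

lemma sum_intCast_smul_castQ (w : Fin n → ℤ) (a : Fin n → Fin m → ℤ) :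
    ∑ i, (w i : ℚ) • castQ a i = fun p => ((∑ i, w i • a i) p : ℚ) := by
  ext p
  simp [castQ, Finset.sum_apply]

lemma intCast_mem_kerQ_iff {w : Fin n → ℤ} {a : Fin n → Fin m → ℤ} :
    (fun i => (w i : ℚ)) ∈ kerQ (castQ a) ↔ ∑ i, w i • a i = 0 := by
  simp only [kerQ, Set.mem_ofPred_eq, sum_intCast_smul_castQ, funext_iff, Pi.zero_apply,
    Int.cast_eq_zero]

lemma exists_intCast_eq_nsmul (x : Fin n → ℚ) :
    ∃ N : ℕ, 0 < N ∧ ∃ w : Fin n → ℤ, ∀ i, (w i : ℚ) = N * x i := by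
  refine ⟨∏ j, (x j).den, Finset.prod_pos fun j _ => (x j).pos,
    fun i => (x i).num * ((∏ j, (x j).den) / (x i).den : ℕ), fun i => ?_⟩
  obtain ⟨k, hk⟩ := Finset.dvd_prod_of_mem (fun j => (x j).den) (Finset.mem_univ i)
  simp only
  rw [hk, Nat.mul_div_cancel_left k (x i).pos]
  push_cast
  rw [← Rat.mul_den_eq_num (x i)]
  ring

lemma signClosed_kerQ_iff {L : AddSubgroup (Fin n → ℤ)} {a : Fin n → Fin m → ℤ}
    (hA : ∀ u : Fin n → ℤ, u ∈ satSet L ↔ ∑ i, u i • a i = 0) {T : Set (Fin n)} :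
    SignClosed (kerQ (castQ a)) T ↔ SignClosed (L : Set (Fin n → ℤ)) T := by
  constructor
  · intro hT u hu hpos i hi
    have hk := intCast_mem_kerQ_iff.2 ((hA u).1 ⟨1, one_ne_zero, by simpa using hu⟩)
    exact hT _ hk (fun j hj => hpos j (Int.cast_pos.1 hj)) i (Int.cast_lt_zero.2 hi)
  · -- clear denominators, then pass from `Sat(L)` to `L` by a square scalar `d * d > 0`
    intro hT x hx hpos i hi
    obtain ⟨N, hN, w, hw⟩ := exists_intCast_eq_nsmul x
    have hNQ : (0 : ℚ) < N := Nat.cast_pos.2 hN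
    have hwk : (fun i => (w i : ℚ)) ∈ kerQ (castQ a) := by
      simp only [kerQ, Set.mem_ofPred_eq, hw, mul_smul, ← Finset.smul_sum]
      rw [show ∑ i, x i • castQ a i = 0 from hx, smul_zero]
    obtain ⟨d, hd, hdw⟩ := (hA w).2 (intCast_mem_kerQ_iff.1 hwk)
    have hdd : 0 < d * d := mul_self_pos.2 hd
    refine hT (d • d • w) (zsmul_mem hdw d) (fun j hj => hpos j ?_) i ?_
    · have hj : 0 < w j := by simpa [← mul_assoc, mul_pos_iff_of_pos_left hdd] using hj
      exact (mul_pos_iff_of_pos_left hNQ).1 (hw j ▸ Int.cast_pos.2 hj)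
    · have hi : w i < 0 := Int.cast_lt_zero.1 (by rw [hw i]; exact mul_neg_of_pos_of_neg hNQ hi)
      simpa [← mul_assoc] using mul_neg_of_pos_of_neg hdd hi

end Saturation

section RelativeInterior

variable {m t : ℕ} {r : Fin t → Fin m → ℚ}

lemma add_mem_relintE {E : Finset (Fin t)} {y z : Fin m → ℚ} (hy : y ∈ posE r E)
    (hz : z ∈ relintE r E) : y + z ∈ relintE r E := by
  obtain ⟨d, hd, hdE, rfl⟩ := hy
  obtain ⟨e, he, heE, rfl⟩ := hz
  exact ⟨d + e, fun k hk => add_pos_of_nonneg_of_pos (hd k) (he k hk),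
    fun k hk => by simp [hdE k hk, heE k hk], by simp [add_smul, Finset.sum_add_distrib]⟩

lemma smul_sum_mem_relintE {ε : ℚ} (hε : 0 < ε) (E : Finset (Fin t)) :
    ε • ∑ k ∈ E, r k ∈ relintE r E := by
  classical
  refine ⟨fun k => if k ∈ E then ε else 0, fun k hk => by simp [hk, hε],
    fun k hk => by simp [hk], ?_⟩
  simp [Finset.smul_sum, ite_smul]

lemma exists_pos_sub_smul_mem_posE {E : Finset (Fin t)} {x z : Fin m → ℚ}
    (hx : x ∈ relintE r E) (hz : z ∈ posE r E) : ∃ ε : ℚ, 0 < ε ∧ x - ε • z ∈ posE r E := by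
  obtain ⟨c, hc, hcE, rfl⟩ := hx
  obtain ⟨f, -, hfE, rfl⟩ := hz
  have hsmall : ∀ᶠ ε in nhdsWithin (0 : ℚ) (Set.Ioi 0), ∀ k ∈ E, ε * f k < c k :=
    (Filter.eventually_all_finset E).2 fun k hk =>
      (((continuous_id.mul continuous_const).tendsto' (0 : ℚ) 0 (by simp)).mono_left
        nhdsWithin_le_nhds).eventually (gt_mem_nhds (hc k hk))
  obtain ⟨ε, hεE, hε⟩ := (hsmall.and self_mem_nhdsWithin).exists
  refine ⟨ε, hε, fun k => c k - ε * f k, fun k => ?_, fun k hk => by simp [hcE k hk, hfE k hk],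
    by simp [sub_smul, Finset.sum_sub_distrib, Finset.smul_sum, smul_smul]⟩
  by_cases hk : k ∈ E
  · exact sub_nonneg.2 (hεE k hk).le
  · simp [hcE k hk, hfE k hk]

lemma relintE_subset_relintE {E₀ E₁ : Finset (Fin t)} (hsub : E₀ ⊆ E₁)
    (hr : ∀ k ∈ E₁, r k ∈ posE r E₀) : relintE r E₀ ⊆ relintE r E₁ := by
  intro x hx
  obtain ⟨ε, hε, hxε⟩ := exists_pos_sub_smul_mem_posE hx (sum_mem_posE E₁ hr)
  simpa using add_mem_relintE (posE_mono r hsub hxε) (smul_sum_mem_relintE hε E₁)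

lemma exists_relintE_of_sum_smul_mem {ι : Type*} {E : Finset (Fin t)} (s : Finset ι)
    {c : ι → ℚ} (hc : ∀ i ∈ s, 0 < c i) {y : ι → Fin m → ℚ} (hy : ∀ i ∈ s, y i ∈ posE r E) :
    ∃ E₀ ⊆ E, ∑ i ∈ s, c i • y i ∈ relintE r E₀ ∧ ∀ i ∈ s, y i ∈ posE r E₀ := by
  classical
  choose! e he heE hey using hy
  set D : Fin t → ℚ := fun k => ∑ i ∈ s, c i * e i k
  have hterm : ∀ k, ∀ i ∈ s, 0 ≤ c i * e i k := fun k i hi => mul_nonneg (hc i hi).le (he i hi k)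
  have hD : ∀ k, ¬ 0 < D k → ∀ i ∈ s, e i k = 0 := fun k hk i hi => by
    have := (Finset.sum_eq_zero_iff_of_nonneg (hterm k)).1
      (le_antisymm (not_lt.1 hk) (Finset.sum_nonneg (hterm k))) i hi
    exact (mul_eq_zero.1 this).resolve_left (hc i hi).ne'
  refine ⟨Finset.univ.filter (0 < D ·), fun k hk => ?_, ⟨D, fun k hk => by simpa using hk,
    fun k hk => ?_, ?_⟩, fun i hi => ⟨e i, he i hi, fun k hk => hD k (by simpa using hk) i hi,
    hey i hi⟩⟩
  · by_contra hkE
    have : D k = 0 := Finset.sum_eq_zero fun i hi => by rw [heE i hi k hkE, mul_zero]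
    simp [this] at hk
  · exact Finset.sum_eq_zero fun i hi => by rw [hD k (by simpa using hk) i hi, mul_zero]
  · rw [Finset.sum_congr rfl fun i hi => by rw [hey i hi, Finset.smul_sum], Finset.sum_comm]
    simp [D, Finset.sum_smul, smul_smul]

lemma LinearMap.mem_relintE_comp {r' : ℕ} (π : (Fin m → ℚ) →ₗ[ℚ] (Fin r' → ℚ))
    {E : Finset (Fin t)} {x : Fin m → ℚ} (hx : x ∈ relintE r E) :
    π x ∈ relintE (fun k => π (r k)) E := by
  obtain ⟨d, hd, hdE, rfl⟩ := hx
  exact ⟨d, hd, hdE, by simp [map_sum]⟩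

end RelativeInterior

section MonomialCones

variable {n m t : ℕ}

lemma mem_coneOf_of_mem_support {v : Fin n → Fin m → ℚ} {r : Fin t → Fin m → ℚ}
    {u : Fin n →₀ ℕ} {i : Fin n} (hi : i ∈ u.support) : v i ∈ coneOf v r u :=
  Set.mem_iInter₂.2 fun _ hE => hE i hi

lemma coneOf_subset_posE {v : Fin n → Fin m → ℚ} {r : Fin t → Fin m → ℚ} {u : Fin n →₀ ℕ}
    {E : Finset (Fin t)} (h : ∀ i ∈ u.support, v i ∈ posE r E) : coneOf v r u ⊆ posE r E :=
  Set.biInter_subset_of_mem h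

/-- The `A`-degree of the monomial `x^u`. -/
def degA (v : Fin n → Fin m → ℚ) (u : Fin n →₀ ℕ) : Fin m → ℚ := ∑ i, (u i : ℚ) • v i

lemma degA_mem_relintE_of_coneOf_eq {v : Fin n → Fin m → ℚ} {r : Fin t → Fin m → ℚ}
    {u : Fin n →₀ ℕ} {E : Finset (Fin t)} (hcone : coneOf v r u = posE r E) :
    degA v u ∈ relintE r E := by
  have hvE : ∀ i ∈ u.support, v i ∈ posE r E := fun i hi => hcone ▸ mem_coneOf_of_mem_support hi
  obtain ⟨E₀, hE₀, hrel, hv₀⟩ := exists_relintE_of_sum_smul_mem u.support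
    (fun i hi => Nat.cast_pos.2 (Nat.pos_of_ne_zero (Finsupp.mem_support_iff.1 hi))) hvE
  have hdeg : degA v u = ∑ i ∈ u.support, (u i : ℚ) • v i :=
    (Finset.sum_subset (Finset.subset_univ _) fun i _ hi => by
      simp [Finsupp.notMem_support_iff.1 hi]).symm
  refine relintE_subset_relintE hE₀ (fun k hk => ?_) (hdeg ▸ hrel)
  exact (hcone ▸ coneOf_subset_posE hv₀) (mem_posE_of_mem r hk)

lemma LinearMap.map_degA {r' : ℕ} (π : (Fin m → ℚ) →ₗ[ℚ] (Fin r' → ℚ))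
    {v : Fin n → Fin m → ℚ} {w : Fin n → Fin r' → ℚ} (hπ : ∀ i, π (v i) = w i)
    (u : Fin n →₀ ℕ) : π (degA v u) = degA w u := by
  simp [degA, map_sum, hπ]

lemma degA_eq_of_isLHomog {K : Type*} [CommSemiring K] {r' : ℕ} {L' : AddSubgroup (Fin n → ℤ)}
    {b : Fin n → Fin r' → ℤ} (hB : ∀ u : Fin n → ℤ, u ∈ satSet L' ↔ ∑ i, u i • b i = 0)
    {F : MvPolynomial (Fin n) K} (hF : IsLHomog (L' : Set (Fin n → ℤ)) F) {u u₀ : Fin n →₀ ℕ}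
    (hu : u ∈ F.support) (hu₀ : u₀ ∈ F.support) : degA (castQ b) u = degA (castQ b) u₀ := by
  have hker : ∑ i, (((u i : ℤ) - u₀ i : ℤ) : ℚ) • castQ b i = 0 :=
    intCast_mem_kerQ_iff.2 ((hB _).1 ⟨1, one_ne_zero, by simpa using hF u hu u₀ hu₀⟩)
  rw [← sub_eq_zero, degA, degA, ← Finset.sum_sub_distrib]
  simpa [sub_smul] using hker

lemma dFace_of_isLHomog {K : Type*} [CommSemiring K] {f r' : ℕ} {L' : AddSubgroup (Fin n → ℤ)}
    {v : Fin n → Fin m → ℚ} {b : Fin n → Fin r' → ℤ}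
    (hB : ∀ u : Fin n → ℤ, u ∈ satSet L' ↔ ∑ i, u i • b i = 0)
    {π : (Fin m → ℚ) →ₗ[ℚ] (Fin r' → ℚ)} (hπ : ∀ i, π (v i) = castQ b i)
    (r : Fin t → Fin m → ℚ) (𝔼 : Fin f → Finset (Fin t)) {F : MvPolynomial (Fin n) K}
    (hF : IsLHomog (L' : Set (Fin n → ℤ)) F) :
    DFace (fun k => π (r k)) 𝔼 {j | ∃ u ∈ F.support, coneOf v r u = posE r (𝔼 j)} := by
  rcases F.support.eq_empty_or_nonempty with h | ⟨u₀, hu₀⟩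
  · exact ⟨0, Set.mem_iInter₂.2 fun j ⟨u, hu, _⟩ => by simp [h] at hu⟩
  refine ⟨degA (castQ b) u₀, Set.mem_iInter₂.2 fun j ⟨u, hu, hcone⟩ => ?_⟩
  rw [← degA_eq_of_isLHomog hB hF hu hu₀, ← π.map_degA hπ]
  exact π.mem_relintE_comp (degA_mem_relintE_of_coneOf_eq hcone)

end MonomialCones

section MinimalNonfaces

variable {n m t : ℕ} {σ : Set (Fin m → ℚ)} {r : Fin t → Fin m → ℚ}

lemma isFaceOf_posE_of_ssubset (hext : ∀ k E, r k ∈ posE r E → k ∈ E) {E : Finset (Fin t)}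
    (hmin : ∀ E', ¬ IsFaceOf σ (posE r E') → posE r E' ⊆ posE r E → posE r E' = posE r E)
    {κ : Finset (Fin t)} (hκ : κ ⊂ E) : IsFaceOf σ (posE r κ) := by
  by_contra hnf
  have h := hmin κ hnf (posE_mono r hκ.subset)
  exact hκ.2 fun k hk => hext k κ (h ▸ mem_posE_of_mem r hk)

lemma coneOf_eq_posE {v : Fin n → Fin m → ℚ} (hrσ : ∀ k, r k ∈ σ)
    (hext : ∀ k E, r k ∈ posE r E → k ∈ E) {E : Finset (Fin t)}
    (hface : ∀ κ ⊂ E, IsFaceOf σ (posE r κ)) {u : Fin n →₀ ℕ}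
    (hu : ∀ i ∈ u.support, ∃ κ ⊂ E, v i ∈ posE r κ)
    (hnot : ∀ κ ⊂ E, ∃ i ∈ u.support, v i ∉ posE r κ) : coneOf v r u = posE r E := by
  classical
  refine (coneOf_subset_posE fun i hi => ?_).antisymm (Set.subset_iInter₂ fun E' hE' => ?_)
  · obtain ⟨κ, hκ, hi⟩ := hu i hi
    exact posE_mono r hκ.subset hi
  -- the rays of `σ(E)` inside `σ(E')` span a proper subcone holding every generator of `x^u`
  refine posE_subset_of_forall_mem fun k hk => ?_
  by_contra hkE'
  obtain ⟨i, hi, hiκ⟩ := hnot (E.filter fun l => r l ∈ posE r E')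
    (Finset.filter_ssubset.2 ⟨k, hk, hkE'⟩)
  obtain ⟨κ, hκ, hiκ'⟩ := hu i hi
  refine hiκ (posE_mono r (fun l hl => ?_) ((hface κ hκ).mem_posE_inter hrσ hext hiκ' (hE' i hi)))
  obtain ⟨hlκ, hlE'⟩ := Finset.mem_inter.1 hl
  exact Finset.mem_filter.2 ⟨hκ.subset hlκ, mem_posE_of_mem r hlE'⟩

lemma posE_eq_of_forall_mem_iff {v : Fin n → Fin m → ℚ}
    (hgen : ∀ k, ∃ i, ∃ q : ℚ, 0 < q ∧ v i = q • r k) {E : Finset (Fin t)} (hE : ∀ k, E ≠ {k})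
    {S : Finset (Fin n)} (hS : ∀ i, i ∈ S ↔ ∃ κ ⊂ E, v i ∈ posE r κ) : posE v S = posE r E := by
  refine (posE_subset_of_forall_mem fun i hi => ?_).antisymm
    (posE_subset_of_forall_mem fun k hk => ?_)
  · obtain ⟨κ, hκ, hi⟩ := (hS i).1 hi
    exact posE_mono r hκ.subset hi
  · obtain ⟨i, q, hq, hiq⟩ := hgen k
    have hiS : i ∈ S := (hS i).2 ⟨{k},
      Finset.ssubset_iff_subset_ne.2 ⟨Finset.singleton_subset_iff.2 hk, (hE k).symm⟩,
      hiq ▸ smul_mem_posE hq.le (mem_posE_of_mem r (Finset.mem_singleton_self k))⟩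
    have hk : r k = q⁻¹ • v i := by rw [hiq, smul_smul, inv_mul_cancel₀ hq.ne', one_smul]
    exact hk ▸ smul_mem_posE (inv_nonneg.2 hq.le) (mem_posE_of_mem v hiS)

theorem exists_mem_support_coneOf_eq {K : Type*} [Field K] {s : ℕ} {L : AddSubgroup (Fin n → ℤ)}
    {a : Fin n → Fin m → ℤ} (hA : ∀ u : Fin n → ℤ, u ∈ satSet L ↔ ∑ i, u i • a i = 0)
    (hr0 : ∀ k, r k ≠ 0) (hrσ : ∀ k, r k ∈ posQ (castQ a))
    (hray : ∀ k, IsFaceOf (posQ (castQ a)) (rayOf (r k)))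
    (hext : ∀ k E, r k ∈ posE r E → k ∈ E) {E : Finset (Fin t)}
    (hE : ¬ IsFaceOf (posQ (castQ a)) (posE r E))
    (hface : ∀ κ ⊂ E, IsFaceOf (posQ (castQ a)) (posE r κ)) {F : Fin s → MvPolynomial (Fin n) K}
    (hrad : (latticeIdeal K L).radical = (Ideal.span (Set.range F)).radical) :
    ∃ i, ∃ u ∈ (F i).support, coneOf (castQ a) r u = posE r E := by
  classical
  by_contra! hcone
  set S := Finset.univ.filter fun i => ∃ κ ⊂ E, castQ a i ∈ posE r κ
  have hS : ∀ i, i ∈ S ↔ ∃ κ ⊂ E, castQ a i ∈ posE r κ := by simp [S]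
  have hvanish : ∀ k, MvPolynomial.eval ((S : Set (Fin n)).indicator 1) (F k) = 0 := fun k =>
    eval_indicator_eq_zero_of_cover (F k) S E.ssubsets (fun κ => {i | castQ a i ∈ posE r κ})
      (fun κ hκ i hi => (hS i).2 ⟨κ, Finset.mem_ssubsets.1 hκ, hi⟩)
      (fun u hu huS => by
        by_contra! hnot
        exact hcone k u hu (coneOf_eq_posE hrσ hext hface (fun i hi => (hS i).1 (huS hi))
          fun κ hκ => by simpa using Set.not_subset.1 (hnot κ (Finset.mem_ssubsets.2 hκ))))
      fun R hR _ => (signClosed_iff_forall_eval_eq_zero hrad _).1 ((signClosed_kerQ_iff hA).1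
        (SignClosed.biInter fun κ hκ => (hface κ (Finset.mem_ssubsets.1 (hR hκ))).signClosed)) k
  have hS_closed : SignClosed (kerQ (castQ a)) (S : Set (Fin n)) :=
    (signClosed_kerQ_iff hA).2 ((signClosed_iff_forall_eval_eq_zero hrad _).2 hvanish)
  have hgen : ∀ k, ∃ i, ∃ q : ℚ, 0 < q ∧ castQ a i = q • r k := fun k =>
    exists_pos_smul_eq_of_isFaceOf_rayOf (hray k) (hrσ k) (hr0 k)
  have hsingle : ∀ k, E ≠ {k} := by
    rintro k rfl
    exact hE (posE_singleton r k ▸ hray k)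
  exact hE (posE_eq_of_forall_mem_iff hgen hsingle hS ▸ hS_closed.isFaceOf_posE)

end MinimalNonfaces

theorem stmt16_general {K : Type*} [Field K] {n m t f r' s : ℕ}
    (L L' : AddSubgroup (Fin n → ℤ))
    (a : Fin n → Fin m → ℤ)
    (hA : ∀ u : Fin n → ℤ, u ∈ satSet L ↔ ∑ i, u i • a i = 0)
    (b : Fin n → Fin r' → ℤ)
    (hB : ∀ u : Fin n → ℤ, u ∈ satSet L' ↔ ∑ i, u i • b i = 0)
    (rvec : Fin t → Fin m → ℤ)
    (hr0 : ∀ i, castQ rvec i ≠ 0)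
    (hray : ∀ i, IsFaceOf (posQ (castQ a)) (rayOf (castQ rvec i)))
    (hrinj : ∀ i j : Fin t, rayOf (castQ rvec i) = rayOf (castQ rvec j) → i = j)
    (hspan : posQ (castQ a) = posQ (castQ rvec))
    (𝔼 : Fin f → Finset (Fin t))
    (hE1 : ∀ j : Fin f, ¬ IsFaceOf (posQ (castQ a)) (posE (castQ rvec) (𝔼 j)))
    (hE2 : ∀ (j : Fin f) (E : Finset (Fin t)),
      ¬ IsFaceOf (posQ (castQ a)) (posE (castQ rvec) E) →
      posE (castQ rvec) E ⊆ posE (castQ rvec) (𝔼 j) →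
      posE (castQ rvec) E = posE (castQ rvec) (𝔼 j))
    (π : (Fin m → ℚ) →ₗ[ℚ] (Fin r' → ℚ))
    (hπ : ∀ i, π (castQ a i) = castQ b i)
    (F : Fin s → MvPolynomial (Fin n) K)
    (hFhom : ∀ i, IsLHomog (L' : Set (Fin n → ℤ)) (F i))
    (hrad : (latticeIdeal K L).radical = (Ideal.span (Set.range F)).radical) :
    (∀ j : Fin f, ∃ i : Fin s, ∃ u ∈ (F i).support,
      coneOf (castQ a) (castQ rvec) u = posE (castQ rvec) (𝔼 j)) ∧
    (∀ i : Fin s, DFace (fun i => π (castQ rvec i)) 𝔼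
      {j : Fin f | ∃ u ∈ (F i).support,
        coneOf (castQ a) (castQ rvec) u = posE (castQ rvec) (𝔼 j)}) := by
  have hrσ : ∀ k, castQ rvec k ∈ posQ (castQ a) := fun k => hspan ▸ mem_posQ_self _ k
  have hext : ∀ k E, castQ rvec k ∈ posE (castQ rvec) E → k ∈ E := fun _ _ =>
    mem_of_mem_posE_of_isFaceOf_rayOf hr0 hrσ hray hrinj
  exact ⟨fun j => exists_mem_support_coneOf_eq hA hr0 hrσ hray hext (hE1 j)
      (fun _ hκ => isFaceOf_posE_of_ssubset hext (hE2 j) hκ) hrad,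
    fun i => dFace_of_isLHomog hB hπ _ 𝔼 (hFhom i)⟩

/-- if the `L'`-homogeneous polynomials `F₁,…,Fₛ` generate `rad(I_L)` up to
radical, then `⋃ᵢ D_{L'}^L(Fᵢ)` is a spanning subcomplex of `D_{L'}^L` and each
`D_{L'}^L(Fᵢ)` is a simplex. -/
theorem stmt16 {K : Type*} [Field K] {n m t f r' s : ℕ}
    (L L' : AddSubgroup (Fin n → ℤ))
    (hLpos : ∀ u ∈ L, (∀ i, 0 ≤ u i) → u = (0 : Fin n → ℤ))
    (hLL' : L ≤ L')
    (a : Fin n → Fin m → ℤ)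
    (hA : ∀ u : Fin n → ℤ, u ∈ satSet L ↔ ∑ i, u i • a i = 0)
    (b : Fin n → Fin r' → ℤ)
    (hB : ∀ u : Fin n → ℤ, u ∈ satSet L' ↔ ∑ i, u i • b i = 0)
    (rvec : Fin t → Fin m → ℤ)
    (hr0 : ∀ i, castQ rvec i ≠ 0)
    (hray : ∀ i, IsFaceOf (posQ (castQ a)) (rayOf (castQ rvec i)))
    (hrinj : ∀ i j : Fin t, rayOf (castQ rvec i) = rayOf (castQ rvec j) → i = j)
    (hspan : posQ (castQ a) = posQ (castQ rvec))
    (𝔼 : Fin f → Finset (Fin t))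
    (hE1 : ∀ j : Fin f, ¬ IsFaceOf (posQ (castQ a)) (posE (castQ rvec) (𝔼 j)))
    (hE2 : ∀ (j : Fin f) (E : Finset (Fin t)),
      ¬ IsFaceOf (posQ (castQ a)) (posE (castQ rvec) E) →
      posE (castQ rvec) E ⊆ posE (castQ rvec) (𝔼 j) →
      posE (castQ rvec) E = posE (castQ rvec) (𝔼 j))
    (hE3 : ∀ E : Finset (Fin t), ¬ IsFaceOf (posQ (castQ a)) (posE (castQ rvec) E) →
      ∃ j : Fin f, posE (castQ rvec) (𝔼 j) ⊆ posE (castQ rvec) E)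
    (hEinj : ∀ j k : Fin f, posE (castQ rvec) (𝔼 j) = posE (castQ rvec) (𝔼 k) → j = k)
    (π : (Fin m → ℚ) →ₗ[ℚ] (Fin r' → ℚ))
    (hπ : ∀ i, π (castQ a i) = castQ b i)
    (F : Fin s → MvPolynomial (Fin n) K)
    (hFhom : ∀ i, IsLHomog (L' : Set (Fin n → ℤ)) (F i))
    (hrad : (latticeIdeal K L).radical = (Ideal.span (Set.range F)).radical) :
    (∀ j : Fin f, ∃ i : Fin s, ∃ u ∈ (F i).support,
      coneOf (castQ a) (castQ rvec) u = posE (castQ rvec) (𝔼 j)) ∧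
    (∀ i : Fin s, DFace (fun i => π (castQ rvec i)) 𝔼
      {j : Fin f | ∃ u ∈ (F i).support,
        coneOf (castQ a) (castQ rvec) u = posE (castQ rvec) (𝔼 j)}) :=
  stmt16_general L L' a hA b hB rvec hr0 hray hrinj hspan 𝔼 hE1 hE2 π hπ F hFhom hrad
end
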